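/- arXiv:1008.1939 — 3 statements merged into one kernel-verified Lean document; each statement's English description precedes it below -/
import Mathlib

section
/- Let H be a closed half-space in ℝ^N and f : ℝ → ℝ a measurable function. For any measurable u : ℝ^N → ℝ such that f∘u is integrable on ℝ^N, the polarization u^H satisfies ∫_{ℝ^N} f(u^H(x)) dx = ∫_{ℝ^N} f(u(x)) dx. -/
open MeasureTheory

/-- Reflection of `x` across the hyperplane `{x | ⟪x, e⟫ = t}`. -/
noncomputable def reflH {N : ℕ} (e : EuclideanSpace ℝ (Fin N)) (t : ℝ)
    (x : EuclideanSpace ℝ (Fin N)) : EuclideanSpace ℝ (Fin N) :=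
  x - (2 * ((inner ℝ x e : ℝ) - t)) • e

/-- Polarization of `u` with respect to the closed half-space `{x | t ≤ ⟪x, e⟫}`. -/
noncomputable def polarize {N : ℕ} (e : EuclideanSpace ℝ (Fin N)) (t : ℝ)
    (u : EuclideanSpace ℝ (Fin N) → ℝ) (x : EuclideanSpace ℝ (Fin N)) : ℝ :=
  if t ≤ (inner ℝ x e : ℝ) then max (u x) (u (reflH e t x)) else min (u x) (u (reflH e t x))

/-!
The reflection `σ` across `∂H` preserves Lebesgue measure and swaps the two sides of `∂H`,
and on every pair `{x, σ x}` the polarization only permutes the values `u x`, `u (σ x)`. Hence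
`f ∘ uᴴ + f ∘ uᴴ ∘ σ = f ∘ u + f ∘ u ∘ σ`, and integrating both sides gives
`2 ∫ f ∘ uᴴ = 2 ∫ f ∘ u`.
-/

theorem apply_max_add_apply_min {α β : Type*} [LinearOrder α] [AddCommMagma β] (g : α → β)
    (a b : α) : g (max a b) + g (min a b) = g a + g b := by
  rcases le_total a b with h | h
  · rw [max_eq_right h, min_eq_left h, add_comm]
  · rw [max_eq_left h, min_eq_right h]

theorem MeasureTheory.MeasurePreserving.integral_comp_of_integrable {α β E : Type*}
    [MeasurableSpace α] [MeasurableSpace β] [NormedAddCommGroup E] [NormedSpace ℝ E]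
    {μ : Measure α} {ν : Measure β} {σ : α → β} (hσ : MeasurePreserving σ μ ν) {k : β → E}
    (hk : Integrable k ν) : ∫ x, k (σ x) ∂μ = ∫ y, k y ∂ν := by
  rw [← integral_map hσ.measurable.aemeasurable
    (by rw [hσ.map_eq]; exact hk.aestronglyMeasurable), hσ.map_eq]

theorem MeasureTheory.MeasurePreserving.integral_eq_of_add_comp_eq {α E : Type*}
    [MeasurableSpace α] [NormedAddCommGroup E] [NormedSpace ℝ E] {μ : Measure α} {σ : α → α}
    (hσ : MeasurePreserving σ μ μ) {g h : α → E} (hg : Integrable g μ) (hh : Integrable h μ)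
    (hgh : ∀ x, g x + g (σ x) = h x + h (σ x)) :
    ∫ x, g x ∂μ = ∫ x, h x ∂μ := by
  have integral_add_comp : ∀ k : α → E, Integrable k μ →
      ∫ x, (k x + k (σ x)) ∂μ = (2 : ℝ) • ∫ x, k x ∂μ := fun k hk => by
    rw [integral_add (g := fun x => k (σ x)) hk (hσ.integrable_comp_of_integrable hk),
      hσ.integral_comp_of_integrable hk, two_smul]
  have h2 := integral_add_comp g hg
  rw [funext hgh, integral_add_comp h hh] at h2
  exact (smul_right_injective E two_ne_zero h2).symm

namespace Polarization

variable {N : ℕ} {e : EuclideanSpace ℝ (Fin N)} {t : ℝ}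

theorem inner_reflH (he : ‖e‖ = 1) (x : EuclideanSpace ℝ (Fin N)) :
    (inner ℝ (reflH e t x) e : ℝ) = 2 * t - inner ℝ x e := by
  rw [reflH, inner_sub_left, real_inner_smul_left, real_inner_self_eq_norm_sq, he]
  ring

theorem reflH_reflH (he : ‖e‖ = 1) (x : EuclideanSpace ℝ (Fin N)) :
    reflH e t (reflH e t x) = x := by
  rw [reflH, inner_reflH he, reflH]
  module

theorem reflH_of_inner_eq {x : EuclideanSpace ℝ (Fin N)} (hx : (inner ℝ x e : ℝ) = t) :
    reflH e t x = x := by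
  rw [reflH, hx, sub_self, mul_zero, zero_smul, sub_zero]

theorem reflH_eq_reflection (he : ‖e‖ = 1) (x : EuclideanSpace ℝ (Fin N)) :
    reflH e t x = (ℝ ∙ e)ᗮ.reflection (x - t • e) + t • e := by
  rw [Submodule.reflection_orthogonal_apply, Submodule.reflection_singleton_apply, reflH]
  simp only [he, inner_sub_right, real_inner_smul_right, real_inner_self_eq_norm_sq,
    real_inner_comm e x, RCLike.ofReal_one, one_pow, div_one, mul_one]
  module

theorem reflH_measurePreserving (he : ‖e‖ = 1) :
    MeasurePreserving (reflH e t) (volume : Measure (EuclideanSpace ℝ (Fin N))) volume := by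
  have hdecomp : reflH e t = (· + t • e) ∘ (ℝ ∙ e)ᗮ.reflection ∘ (· + -(t • e)) := by
    funext x
    simp [reflH_eq_reflection he x, sub_eq_add_neg]
  rw [hdecomp]
  exact (measurePreserving_add_right volume _).comp
    ((LinearIsometryEquiv.measurePreserving _).comp (measurePreserving_add_right volume _))

theorem polarize_eq_or (u : EuclideanSpace ℝ (Fin N) → ℝ) (x : EuclideanSpace ℝ (Fin N)) :
    polarize e t u x = u x ∨ polarize e t u x = u (reflH e t x) := by
  unfold polarize
  split
  · exact max_choice _ _
  · exact min_choice _ _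

theorem polarize_of_le {u : EuclideanSpace ℝ (Fin N) → ℝ} {x : EuclideanSpace ℝ (Fin N)}
    (hx : t ≤ inner ℝ x e) : polarize e t u x = max (u x) (u (reflH e t x)) :=
  if_pos hx

theorem polarize_reflH_of_lt (he : ‖e‖ = 1) {u : EuclideanSpace ℝ (Fin N) → ℝ}
    {x : EuclideanSpace ℝ (Fin N)} (hx : t < inner ℝ x e) :
    polarize e t u (reflH e t x) = min (u x) (u (reflH e t x)) := by
  have hσx : ¬ t ≤ inner ℝ (reflH e t x) e := by rw [inner_reflH he]; linarith
  rw [polarize, if_neg hσx, reflH_reflH he, min_comm]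

theorem apply_polarize_add_apply_polarize_reflH {M : Type*} [AddCommMagma M] (he : ‖e‖ = 1)
    (g : ℝ → M) (u : EuclideanSpace ℝ (Fin N) → ℝ) (x : EuclideanSpace ℝ (Fin N)) :
    g (polarize e t u x) + g (polarize e t u (reflH e t x)) = g (u x) + g (u (reflH e t x)) := by
  have of_lt : ∀ y : EuclideanSpace ℝ (Fin N), t < inner ℝ y e →
      g (polarize e t u y) + g (polarize e t u (reflH e t y)) = g (u y) + g (u (reflH e t y)) :=
    fun y hy => by
      rw [polarize_of_le hy.le, polarize_reflH_of_lt he hy, apply_max_add_apply_min]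
  rcases lt_trichotomy (inner ℝ x e) t with hlt | heq | hgt
  · have hσx : t < inner ℝ (reflH e t x) e := by rw [inner_reflH he]; linarith
    simpa only [reflH_reflH he, add_comm] using of_lt _ hσx
  · rw [reflH_of_inner_eq heq, polarize_of_le heq.ge, reflH_of_inner_eq heq, max_self]
  · exact of_lt x hgt

theorem measurable_polarize {u : EuclideanSpace ℝ (Fin N) → ℝ} (hu : Measurable u) :
    Measurable (polarize e t u) := by
  have hσ : Continuous (reflH e t) := by unfold reflH; fun_prop
  exact Measurable.ite (measurableSet_le measurable_const (by fun_prop))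
    (hu.max (hu.comp hσ.measurable)) (hu.min (hu.comp hσ.measurable))

theorem integrable_comp_polarize (he : ‖e‖ = 1) {f : ℝ → ℝ} (hf : Measurable f)
    {u : EuclideanSpace ℝ (Fin N) → ℝ} (hu : Measurable u)
    (hint : Integrable (fun x => f (u x)) volume) :
    Integrable (fun x => f (polarize e t u x)) volume := by
  have hintσ : Integrable (fun x => f (u (reflH e t x))) volume :=
    (reflH_measurePreserving he).integrable_comp_of_integrable hint
  refine (hint.norm.add hintσ.norm).mono' (hf.comp (measurable_polarize hu)).aestronglyMeasurable
    (Filter.Eventually.of_forall fun x => ?_)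
  change ‖f (polarize e t u x)‖ ≤ ‖f (u x)‖ + ‖f (u (reflH e t x))‖
  rcases polarize_eq_or u x with h | h <;> rw [h]
  · exact le_add_of_nonneg_right (norm_nonneg _)
  · exact le_add_of_nonneg_left (norm_nonneg _)

end Polarization

open Polarization in
/-- Integrals of `f ∘ u` are invariant under polarization. -/
theorem stmt1 (N : ℕ) (e : EuclideanSpace ℝ (Fin N)) (he : ‖e‖ = 1) (t : ℝ)
    (f : ℝ → ℝ) (hf : Measurable f)
    (u : EuclideanSpace ℝ (Fin N) → ℝ) (hu : Measurable u)
    (hint : Integrable (fun x => f (u x)) volume) :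
    ∫ x, f (polarize e t u x) = ∫ x, f (u x) :=
  (reflH_measurePreserving he).integral_eq_of_add_comp_eq
    (integrable_comp_polarize he hf hu hint) hint
    (apply_polarize_add_apply_polarize_reflH he f u)
end

section
/- Let G : ℝ_+^m → ℝ_+ be supermodular and non-decreasing in each variable. Then the function (v, w) ↦ G(v)·G(w) from ℝ_+^{2m} to ℝ_+ is supermodular, i.e., for all v, v', w, w' ∈ ℝ_+^m, G(v∨v')G(w∨w') + G(v∧v')G(w∧w') ≥ G(v)G(w) + G(v')G(w'), where ∨ and ∧ denote componentwise max and min. -/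
lemma key_arith (a a' b b' A B C D : ℝ)
    (hA0 : 0 ≤ A) (hb : 0 ≤ b) (hb' : 0 ≤ b') (hD : 0 ≤ D)
    (hAa : a ≤ A) (hAa' : a' ≤ A) (hBA : B ≤ A)
    (hDb : D ≤ b) (hDb' : D ≤ b')
    (hsum1 : a + a' ≤ A + B) (hsum2 : b + b' ≤ C + D) :
    a * b + a' * b' ≤ A * C + B * D := by
  rcases le_total b b' with h | h
  · nlinarith [mul_nonneg hA0 (sub_nonneg.mpr h), mul_le_mul_of_nonneg_left hsum2 hA0,
      mul_le_mul_of_nonneg_right hsum1 hb, mul_nonneg (sub_nonneg.mpr hBA) (sub_nonneg.mpr hDb)]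
  · nlinarith [mul_nonneg hA0 (sub_nonneg.mpr h), mul_le_mul_of_nonneg_left hsum2 hA0,
      mul_le_mul_of_nonneg_right hsum1 hb', mul_nonneg (sub_nonneg.mpr hBA) (sub_nonneg.mpr hDb')]

/-- If `G : ℝ₊^m → ℝ₊` is supermodular and non-decreasing, then
`(v,w) ↦ G(v)·G(w)` is supermodular on `ℝ₊^{2m}`. -/
theorem stmt4 (m : ℕ) (G : (Fin m → ℝ) → ℝ)
    (hG0 : ∀ y : Fin m → ℝ, 0 ≤ y → 0 ≤ G y)
    (hmono : ∀ y z : Fin m → ℝ, 0 ≤ y → y ≤ z → G y ≤ G z)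
    (hsuper : ∀ a b : Fin m → ℝ, 0 ≤ a → 0 ≤ b → G a + G b ≤ G (a ⊔ b) + G (a ⊓ b)) :
    ∀ v v' w w' : Fin m → ℝ, 0 ≤ v → 0 ≤ v' → 0 ≤ w → 0 ≤ w' →
      G v * G w + G v' * G w' ≤ G (v ⊔ v') * G (w ⊔ w') + G (v ⊓ v') * G (w ⊓ w') := by
  intro v v' w w' hv hv' hw hw'
  have hvi : (0 : Fin m → ℝ) ≤ v ⊓ v' := le_inf hv hv'
  have hwi : (0 : Fin m → ℝ) ≤ w ⊓ w' := le_inf hw hw'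
  exact key_arith (G v) (G v') (G w) (G w') (G (v ⊔ v')) (G (v ⊓ v')) (G (w ⊔ w')) (G (w ⊓ w'))
    (hG0 _ (hv.trans le_sup_left)) (hG0 _ hw) (hG0 _ hw') (hG0 _ hwi)
    (hmono _ _ hv le_sup_left) (hmono _ _ hv' le_sup_right)
    (hmono _ _ hvi (inf_le_left.trans le_sup_left))
    (hmono _ _ hwi inf_le_left) (hmono _ _ hwi inf_le_right)
    (hsuper _ _ hv hv') (hsuper _ _ hw hw')
end

section
/- Let G : ℝ^m → ℝ_+ be continuous, supermodular and non-decreasing in each variable on ℝ_+^m, and let V : ℝ_+ → ℝ_+ be non-increasing. Let U = (u_1,…,u_m) with each u_i : ℝ^N → ℝ_+ measurable such that the double integral Q(U) = ∫∫ G(U(x)) V(|x−y|) G(U(y)) dx dy is finite. Then for every closed half-space H ⊂ ℝ^N, Q(U^H) ≥ Q(U), where U^H is the componentwise polarization of U with respect to H. -/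
open MeasureTheory ENNReal NNReal Filter Topology

/-! Reflection `σ` across `∂H` is a measure-preserving involution, so `Q(U)` is a quarter of
the integral of the integrand summed over the orbit `(x, y), (σx, σy), (σx, y), (x, σy)`, and it
suffices to compare these four-term sums pointwise for `x, y ∈ H`. There polarization replaces the
pair `(U x, U σx)` by `(U x ⊔ U σx, U x ⊓ U σx)`, while `|x - y| ≤ |x - σy|`; the four-term sum
then increases by a two-point rearrangement inequality, which holds because `G` is non-negative,
monotone and supermodular and `V` is non-increasing. -/

theorem mul_add_mul_le_of_weak_majorization {p p' q q' A A' B B' : ℝ}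
    (hp : 0 ≤ p) (hp' : 0 ≤ p') (hpA : p ≤ A) (hp'A : p' ≤ A) (hsA : p + p' ≤ A + A')
    (hqB : q ≤ B) (hq'B : q' ≤ B) (hB' : 0 ≤ B') (hB'B : B' ≤ B) (hsB : q + q' ≤ B + B') :
    p * q + p' * q' ≤ A * B + A' * B' := by
  set M := max p p'
  set m := min p p'
  set M' := max q q'
  set n := min q q'
  have hrearr : p * q + p' * q' ≤ M * M' + m * n := by
    rcases le_total p p' with h | h <;> rcases le_total q q' with h' | h' <;>
      simp only [M, m, M', n, max_eq_left, max_eq_right, min_eq_left, min_eq_right, h, h'] <;>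
      linarith [mul_add_mul_le_mul_add_mul h h']
  have hMA : M ≤ A := max_le hpA hp'A
  have hM'B : M' ≤ B := max_le hqB hq'B
  have hm : 0 ≤ m := le_min hp hp'
  have hmM : m ≤ M := min_le_max
  have hsum : M + m = p + p' := (add_comm _ _).trans (min_add_max p p')
  have hsum' : M' + n = q + q' := (add_comm _ _).trans (min_add_max q q')
  calc p * q + p' * q' ≤ M * M' + m * n := hrearr
    _ ≤ M * M' + m * n + (M - m) * (B - M') := by nlinarith
    _ = M * B + m * (M' + n - B) := by ring
    _ ≤ M * B + m * B' := by nlinarith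
    _ = M * (B - B') + (M + m) * B' := by ring
    _ ≤ A * (B - B') + (M + m) * B' := by nlinarith
    _ = A * B + (M + m - A) * B' := by ring
    _ ≤ A * B + A' * B' := by nlinarith

theorem four_point_le_sup_inf {ι : Type*} {G : (ι → ℝ) → ℝ}
    (hG0 : ∀ y : ι → ℝ, 0 ≤ y → 0 ≤ G y) (hmono : ∀ y z : ι → ℝ, 0 ≤ y → y ≤ z → G y ≤ G z)
    (hsuper : ∀ a b : ι → ℝ, 0 ≤ a → 0 ≤ b → G a + G b ≤ G (a ⊔ b) + G (a ⊓ b))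
    {a a' b b' : ι → ℝ} (ha : 0 ≤ a) (ha' : 0 ≤ a') (hb : 0 ≤ b)
    (hb' : 0 ≤ b') {w w' : ℝ} (hw' : 0 ≤ w') (hw'w : w' ≤ w) :
    G a * w * G b + G a' * w * G b' + G a' * w' * G b + G a * w' * G b' ≤
      G (a ⊔ a') * w * G (b ⊔ b') + G (a ⊓ a') * w * G (b ⊓ b') +
        G (a ⊓ a') * w' * G (b ⊔ b') + G (a ⊔ a') * w' * G (b ⊓ b') := by
  have hinf_b : 0 ≤ b ⊓ b' := le_inf hb hb'
  have hdiag : G a * G b + G a' * G b' ≤ G (a ⊔ a') * G (b ⊔ b') + G (a ⊓ a') * G (b ⊓ b') :=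
    mul_add_mul_le_of_weak_majorization (hG0 a ha) (hG0 a' ha')
      (hmono _ _ ha le_sup_left) (hmono _ _ ha' le_sup_right) (hsuper a a' ha ha')
      (hmono _ _ hb le_sup_left) (hmono _ _ hb' le_sup_right) (hG0 _ hinf_b)
      (hmono _ _ hinf_b (inf_le_left.trans le_sup_left)) (hsuper b b' hb hb')
  have hsum : (G a + G a') * (G b + G b') ≤
      (G (a ⊔ a') + G (a ⊓ a')) * (G (b ⊔ b') + G (b ⊓ b')) :=
    mul_le_mul (hsuper a a' ha ha') (hsuper b b' hb hb')
      (add_nonneg (hG0 b hb) (hG0 b' hb')) ((add_nonneg (hG0 a ha) (hG0 a' ha')).trans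
        (hsuper a a' ha ha'))
  -- the left side is `w' * (G a + G a') * (G b + G b') + (w - w') * (G a * G b + G a' * G b')`,
  -- and the right side has the same shape
  linear_combination (w - w') * hdiag + w' * hsum

section Reflection

variable {N : ℕ} {e : EuclideanSpace ℝ (Fin N)} {t : ℝ}

theorem reflH_eq_reflection_add (he : ‖e‖ = 1) (x : EuclideanSpace ℝ (Fin N)) :
    reflH e t x = (ℝ ∙ e)ᗮ.reflection x + (2 * t) • e := by
  rw [Submodule.reflection_orthogonal_apply, Submodule.reflection_singleton_apply, he, reflH,
    real_inner_comm]
  push_cast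
  module

theorem isometry_reflH (he : ‖e‖ = 1) : Isometry (reflH (N := N) e t) := by
  rw [funext (reflH_eq_reflection_add he)]
  exact (isometry_add_right _).comp (ℝ ∙ e)ᗮ.reflection.isometry

theorem measurePreserving_reflH (he : ‖e‖ = 1) :
    MeasurePreserving (reflH e t) (volume : Measure (EuclideanSpace ℝ (Fin N))) volume := by
  rw [funext (reflH_eq_reflection_add he)]
  exact (measurePreserving_add_right volume _).comp
    (ℝ ∙ e)ᗮ.reflection.measurePreserving

theorem inner_reflH (he : ‖e‖ = 1) (x : EuclideanSpace ℝ (Fin N)) :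
    (inner ℝ (reflH e t x) e : ℝ) = 2 * t - inner ℝ x e := by
  rw [reflH, inner_sub_left, real_inner_smul_left, real_inner_self_eq_norm_sq, he]
  ring

theorem reflH_reflH (he : ‖e‖ = 1) (x : EuclideanSpace ℝ (Fin N)) :
    reflH e t (reflH e t x) = x := by
  rw [reflH, inner_reflH he, reflH]
  module

theorem norm_reflH_sub_reflH (he : ‖e‖ = 1) (x y : EuclideanSpace ℝ (Fin N)) :
    ‖reflH e t x - reflH e t y‖ = ‖x - y‖ := by
  simpa only [dist_eq_norm] using (isometry_reflH he).dist_eq x y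

theorem norm_reflH_sub (he : ‖e‖ = 1) (x y : EuclideanSpace ℝ (Fin N)) :
    ‖reflH e t x - y‖ = ‖x - reflH e t y‖ := by
  calc ‖reflH e t x - y‖ = ‖reflH e t x - reflH e t (reflH e t y)‖ := by rw [reflH_reflH he]
    _ = ‖x - reflH e t y‖ := norm_reflH_sub_reflH he x (reflH e t y)

theorem norm_sub_reflH_sq (he : ‖e‖ = 1) (x y : EuclideanSpace ℝ (Fin N)) :
    ‖x - reflH e t y‖ ^ 2 =
      ‖x - y‖ ^ 2 + 4 * ((inner ℝ x e : ℝ) - t) * ((inner ℝ y e : ℝ) - t) := by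
  have hxy : x - reflH e t y = (x - y) + (2 * ((inner ℝ y e : ℝ) - t)) • e := by
    rw [reflH]; abel
  rw [hxy, norm_add_sq_real, norm_smul, he, real_inner_smul_right, inner_sub_left,
    Real.norm_eq_abs, mul_one, sq_abs]
  ring

theorem norm_sub_le_norm_sub_reflH (he : ‖e‖ = 1) {x y : EuclideanSpace ℝ (Fin N)}
    (hx : t ≤ inner ℝ x e) (hy : t ≤ inner ℝ y e) : ‖x - y‖ ≤ ‖x - reflH e t y‖ := by
  have hcross : 0 ≤ 4 * ((inner ℝ x e : ℝ) - t) * ((inner ℝ y e : ℝ) - t) :=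
    mul_nonneg (mul_nonneg zero_le_four (sub_nonneg.2 hx)) (sub_nonneg.2 hy)
  refine (pow_le_pow_iff_left₀ (norm_nonneg _) (norm_nonneg _) two_ne_zero).mp ?_
  linarith [norm_sub_reflH_sq (t := t) he x y]

theorem polarize_of_le (u : EuclideanSpace ℝ (Fin N) → ℝ) {x : EuclideanSpace ℝ (Fin N)}
    (hx : t ≤ inner ℝ x e) : polarize e t u x = max (u x) (u (reflH e t x)) :=
  if_pos hx

theorem polarize_reflH_of_le (he : ‖e‖ = 1) (u : EuclideanSpace ℝ (Fin N) → ℝ)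
    {x : EuclideanSpace ℝ (Fin N)} (hx : t ≤ inner ℝ x e) :
    polarize e t u (reflH e t x) = min (u x) (u (reflH e t x)) := by
  rcases hx.eq_or_lt with hxt | hxt
  · have hfix : reflH e t x = x := by simp [reflH, ← hxt]
    rw [hfix, polarize_of_le u hx, hfix, max_self, min_self]
  · have hout : ¬ t ≤ inner ℝ (reflH e t x) e := by rw [inner_reflH he]; linarith
    rw [polarize, if_neg hout, reflH_reflH he, min_comm]

end Reflection

section OrbitSum

variable {X : Type*} (σ : X → X)

def orbitSum (f : X × X → ℝ) (z : X × X) : ℝ :=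
  f z + f (σ z.1, σ z.2) + f (σ z.1, z.2) + f (z.1, σ z.2)

variable {σ}

theorem orbitSum_reflect_left (hσ : Function.Involutive σ) (f : X × X → ℝ) (x y : X) :
    orbitSum σ f (σ x, y) = orbitSum σ f (x, y) := by
  simp only [orbitSum, hσ x]
  ring

theorem orbitSum_reflect_right (hσ : Function.Involutive σ) (f : X × X → ℝ) (x y : X) :
    orbitSum σ f (x, σ y) = orbitSum σ f (x, y) := by
  simp only [orbitSum, hσ y]
  ring

theorem orbitSum_le_of_le_on {s : Set X} (hσ : Function.Involutive σ)
    (hs : ∀ x, x ∈ s ∨ σ x ∈ s) {f g : X × X → ℝ}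
    (h : ∀ x ∈ s, ∀ y ∈ s, orbitSum σ f (x, y) ≤ orbitSum σ g (x, y)) (z : X × X) :
    orbitSum σ f z ≤ orbitSum σ g z := by
  have hleft : ∀ x ∈ s, ∀ y, orbitSum σ f (x, y) ≤ orbitSum σ g (x, y) := by
    intro x hx y
    rcases hs y with hy | hy
    · exact h x hx y hy
    · simpa only [orbitSum_reflect_right hσ] using h x hx (σ y) hy
  obtain ⟨x, y⟩ := z
  rcases hs x with hx | hx
  · exact hleft x hx y
  · simpa only [orbitSum_reflect_left hσ] using hleft (σ x) hx y

theorem orbitSum_eq_add_comp (f : X × X → ℝ) :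
    orbitSum σ f = f + f ∘ Prod.map σ σ + f ∘ Prod.map σ id + f ∘ Prod.map id σ :=
  rfl

variable [MeasurableSpace X] {μ : Measure X} [SFinite μ]

theorem integrable_comp_prodMap_and_integral_comp_prodMap {τ τ' : X → X}
    (hτ : MeasurePreserving τ μ μ) (hτe : MeasurableEmbedding τ)
    (hτ' : MeasurePreserving τ' μ μ) (hτ'e : MeasurableEmbedding τ')
    {f : X × X → ℝ} (hf : Integrable f (μ.prod μ)) :
    Integrable (f ∘ Prod.map τ τ') (μ.prod μ) ∧
      ∫ z, (f ∘ Prod.map τ τ') z ∂(μ.prod μ) = ∫ z, f z ∂(μ.prod μ) :=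
  ⟨((hτ.prod hτ').integrable_comp_emb (hτe.prodMap hτ'e)).mpr hf,
    (hτ.prod hτ').integral_comp (hτe.prodMap hτ'e) f⟩

theorem integrable_orbitSum_and_integral_orbitSum (hσ : MeasurePreserving σ μ μ)
    (hσe : MeasurableEmbedding σ) {f : X × X → ℝ} (hf : Integrable f (μ.prod μ)) :
    Integrable (orbitSum σ f) (μ.prod μ) ∧
      ∫ z, orbitSum σ f z ∂(μ.prod μ) = 4 * ∫ z, f z ∂(μ.prod μ) := by
  have hid := MeasurePreserving.id μ
  obtain ⟨hi₁, he₁⟩ := integrable_comp_prodMap_and_integral_comp_prodMap hσ hσe hσ hσe hf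
  obtain ⟨hi₂, he₂⟩ :=
    integrable_comp_prodMap_and_integral_comp_prodMap hσ hσe hid .id hf
  obtain ⟨hi₃, he₃⟩ :=
    integrable_comp_prodMap_and_integral_comp_prodMap hid .id hσ hσe hf
  rw [orbitSum_eq_add_comp]
  refine ⟨((hf.add hi₁).add hi₂).add hi₃, ?_⟩
  rw [integral_add' ((hf.add hi₁).add hi₂) hi₃, integral_add' (hf.add hi₁) hi₂,
    integral_add' hf hi₁, he₁, he₂, he₃]
  ring

theorem integral_le_of_orbitSum_le (hσ : MeasurePreserving σ μ μ) (hσe : MeasurableEmbedding σ)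
    {f g : X × X → ℝ} (hf : Integrable f (μ.prod μ)) (hg : Integrable g (μ.prod μ))
    (h : ∀ z, orbitSum σ f z ≤ orbitSum σ g z) :
    ∫ z, f z ∂(μ.prod μ) ≤ ∫ z, g z ∂(μ.prod μ) := by
  obtain ⟨hfi, hf4⟩ := integrable_orbitSum_and_integral_orbitSum hσ hσe hf
  obtain ⟨hgi, hg4⟩ := integrable_orbitSum_and_integral_orbitSum hσ hσe hg
  have := integral_mono hfi hgi h
  rw [hf4, hg4] at this
  linarith

end OrbitSum

def pairIntegrand {ι E : Type*} [SeminormedAddCommGroup E] (G : (ι → ℝ) → ℝ) (V : ℝ → ℝ)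
    (U : ι → E → ℝ) (z : E × E) : ℝ :=
  G (fun i => U i z.1) * V ‖z.1 - z.2‖ * G (fun i => U i z.2)

theorem orbitSum_pairIntegrand_le_polarize {ι : Type*} {N : ℕ} {G : (ι → ℝ) → ℝ}
    (hG0 : ∀ y : ι → ℝ, 0 ≤ y → 0 ≤ G y) (hmono : ∀ y z : ι → ℝ, 0 ≤ y → y ≤ z → G y ≤ G z)
    (hsuper : ∀ a b : ι → ℝ, 0 ≤ a → 0 ≤ b → G a + G b ≤ G (a ⊔ b) + G (a ⊓ b))
    {V : ℝ → ℝ} (hV0 : ∀ r, 0 ≤ V r) (hVanti : ∀ a b : ℝ, 0 ≤ b → b ≤ a → V a ≤ V b)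
    {U : ι → EuclideanSpace ℝ (Fin N) → ℝ} (hU0 : ∀ i x, 0 ≤ U i x)
    {e : EuclideanSpace ℝ (Fin N)} (he : ‖e‖ = 1) {t : ℝ} {x y : EuclideanSpace ℝ (Fin N)}
    (hx : t ≤ inner ℝ x e) (hy : t ≤ inner ℝ y e) :
    orbitSum (reflH e t) (pairIntegrand G V U) (x, y) ≤
      orbitSum (reflH e t) (pairIntegrand G V fun i => polarize e t (U i)) (x, y) := by
  have hU0' : ∀ x, 0 ≤ fun i => U i x := fun x i => hU0 i x
  have hpol : ∀ {x}, t ≤ inner ℝ x e → (fun i => polarize e t (U i) x) =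
      (fun i => U i x) ⊔ fun i => U i (reflH e t x) :=
    fun hx => funext fun i => polarize_of_le (U i) hx
  have hpol_reflH : ∀ {x}, t ≤ inner ℝ x e → (fun i => polarize e t (U i) (reflH e t x)) =
      (fun i => U i x) ⊓ fun i => U i (reflH e t x) :=
    fun hx => funext fun i => polarize_reflH_of_le he (U i) hx
  simp only [orbitSum, pairIntegrand, hpol hx, hpol hy, hpol_reflH hx, hpol_reflH hy,
    norm_reflH_sub_reflH he, norm_reflH_sub he]
  exact four_point_le_sup_inf hG0 hmono hsuper (hU0' x) (hU0' (reflH e t x)) (hU0' y)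
    (hU0' (reflH e t y))
    (hV0 _) (hVanti _ _ (norm_nonneg _) (norm_sub_le_norm_sub_reflH he hx hy))

theorem stmt5_general (N m : ℕ) (G : (Fin m → ℝ) → ℝ)
    (hG0 : ∀ y : Fin m → ℝ, 0 ≤ y → 0 ≤ G y)
    (hmono : ∀ y z : Fin m → ℝ, 0 ≤ y → y ≤ z → G y ≤ G z)
    (hsuper : ∀ a b : Fin m → ℝ, 0 ≤ a → 0 ≤ b → G a + G b ≤ G (a ⊔ b) + G (a ⊓ b))
    (V : ℝ → ℝ) (hV0 : ∀ r, 0 ≤ V r)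
    (hVanti : ∀ a b : ℝ, 0 ≤ b → b ≤ a → V a ≤ V b)
    (U : Fin m → EuclideanSpace ℝ (Fin N) → ℝ)
    (hU0 : ∀ i x, 0 ≤ U i x)
    (e : EuclideanSpace ℝ (Fin N)) (he : ‖e‖ = 1) (t : ℝ)
    (hQint : Integrable (fun z : EuclideanSpace ℝ (Fin N) × EuclideanSpace ℝ (Fin N) =>
      G (fun i => U i z.1) * V ‖z.1 - z.2‖ * G (fun i => U i z.2)) volume)
    (hQHint : Integrable (fun z : EuclideanSpace ℝ (Fin N) × EuclideanSpace ℝ (Fin N) =>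
      G (fun i => polarize e t (U i) z.1) * V ‖z.1 - z.2‖ *
        G (fun i => polarize e t (U i) z.2)) volume) :
    (∫ x, ∫ y, G (fun i => U i x) * V ‖x - y‖ * G (fun i => U i y)) ≤
      ∫ x, ∫ y, G (fun i => polarize e t (U i) x) * V ‖x - y‖ *
        G (fun i => polarize e t (U i) y) := by
  have hhalf : ∀ x, t ≤ inner ℝ x e ∨ t ≤ inner ℝ (reflH e t x) e := fun x => by
    rw [inner_reflH he]
    exact (le_total t (inner ℝ x e)).imp_right fun h => by linarith
  have horbit := orbitSum_le_of_le_on (s := {x | t ≤ inner ℝ x e}) (reflH_reflH he) hhalf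
    fun x hx y hy => orbitSum_pairIntegrand_le_polarize hG0 hmono hsuper hV0 hVanti hU0 he hx hy
  rw [Measure.volume_eq_prod] at hQint hQHint
  calc _ = ∫ z, pairIntegrand G V U z ∂(volume.prod volume) := integral_integral hQint
    _ ≤ ∫ z, pairIntegrand G V (fun i => polarize e t (U i)) z ∂(volume.prod volume) :=
      integral_le_of_orbitSum_le (measurePreserving_reflH he)
        (isometry_reflH he).isClosedEmbedding.measurableEmbedding hQint hQHint horbit
    _ = _ := (integral_integral (f := fun x y =>
        pairIntegrand G V (fun i => polarize e t (U i)) (x, y)) hQHint).symm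

/-- Polarization increases the bilinear convolution functional `Q`. -/
theorem stmt5 (N m : ℕ) (G : (Fin m → ℝ) → ℝ) (hGc : Continuous G)
    (hG0 : ∀ y : Fin m → ℝ, 0 ≤ y → 0 ≤ G y)
    (hmono : ∀ y z : Fin m → ℝ, 0 ≤ y → y ≤ z → G y ≤ G z)
    (hsuper : ∀ a b : Fin m → ℝ, 0 ≤ a → 0 ≤ b → G a + G b ≤ G (a ⊔ b) + G (a ⊓ b))
    (V : ℝ → ℝ) (hV0 : ∀ r, 0 ≤ V r)
    (hVanti : ∀ a b : ℝ, 0 ≤ b → b ≤ a → V a ≤ V b)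
    (U : Fin m → EuclideanSpace ℝ (Fin N) → ℝ)
    (hUm : ∀ i, Measurable (U i)) (hU0 : ∀ i x, 0 ≤ U i x)
    (e : EuclideanSpace ℝ (Fin N)) (he : ‖e‖ = 1) (t : ℝ)
    (hQint : Integrable (fun z : EuclideanSpace ℝ (Fin N) × EuclideanSpace ℝ (Fin N) =>
      G (fun i => U i z.1) * V ‖z.1 - z.2‖ * G (fun i => U i z.2)) volume)
    (hQHint : Integrable (fun z : EuclideanSpace ℝ (Fin N) × EuclideanSpace ℝ (Fin N) =>
      G (fun i => polarize e t (U i) z.1) * V ‖z.1 - z.2‖ *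
        G (fun i => polarize e t (U i) z.2)) volume) :
    (∫ x, ∫ y, G (fun i => U i x) * V ‖x - y‖ * G (fun i => U i y)) ≤
      ∫ x, ∫ y, G (fun i => polarize e t (U i) x) * V ‖x - y‖ *
        G (fun i => polarize e t (U i) y) :=
  stmt5_general N m G hG0 hmono hsuper V hV0 hVanti U hU0 e he t hQint hQHint
end
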